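/- Let Λ be an admissible graph. For every phase-space point ξ^J = (p^J,q^J) ∈ Ξ^J and every q^L ∈ F^L there exists a complex number λ of modulus one, depending only on Λ, q^J and q^L, such that w(ξ^J) ∘ v_{[Λ,q^L]} = λ · z(p^J − Λ^J_J q^J) ∘ v_{[Λ,q^L]} ∘ z(−Λ^I_J q^J) as operators H_I → H_J, where z(p^J − Λ^J_J q^J) acts on H_J and z(−Λ^I_J q^J) acts on H_I. -/

import Mathlib

open scoped BigOperators

noncomputable section

/-- The Hilbert space `H_K` of complex functions on the configurations `F^K`. -/
abbrev HS (F K : Type*) : Type _ := (K → F) → ℂ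

/-- The linear map on function spaces given by an integral kernel. -/
def kernelMap {α β : Type*} [Fintype α] (k : β → α → ℂ) : (α → ℂ) →ₗ[ℂ] (β → ℂ) where
  toFun ψ := fun b => ∑ a, k b a * ψ a
  map_add' ψ φ := by
    funext b
    simp only [Pi.add_apply, mul_add, Finset.sum_add_distrib]
  map_smul' c ψ := by
    funext b
    simp only [Pi.smul_apply, smul_eq_mul, RingHom.id_apply, Finset.mul_sum]
    exact Finset.sum_congr rfl fun _ _ => by ring

/-- The operator of multiplication by a fixed function. -/
def mulFun {α : Type*} (f : α → ℂ) : (α → ℂ) →ₗ[ℂ] (α → ℂ) where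
  toFun ψ := fun a => f a * ψ a
  map_add' ψ φ := by funext a; simp [mul_add]
  map_smul' c ψ := by funext a; simp; ring

/-- The pullback (precomposition) operator along a map of configuration spaces. -/
def compMap {α β : Type*} (σ : β → α) : (α → ℂ) →ₗ[ℂ] (β → ℂ) where
  toFun ψ := fun b => ψ (σ b)
  map_add' _ _ := rfl
  map_smul' _ _ := rfl

variable {F : Type*} [Field F] [Fintype F] [DecidableEq F]

/-- `ε` is an injective character of the additive group of `F` into the unit circle. -/
def IsCharacter (ε : F → ℂ) : Prop :=
  Function.Injective ε ∧ (∀ a, ‖ε a‖ = 1) ∧ ∀ a b, ε (a + b) = ε a * ε b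

/-- The symmetric bicharacter `χ(p,q) = Π_k ε(p_k q_k)`. -/
def chi (ε : F → ℂ) {K : Type*} [Fintype K] (p q : K → F) : ℂ := ∏ k, ε (p k * q k)

/-- The shift operator `x(q)`, `(x(q)ψ)(q₁) = ψ(q₁ - q)`. -/
def shiftOp {K : Type*} (q : K → F) : HS F K →ₗ[ℂ] HS F K :=
  compMap (fun q₁ => q₁ - q)

/-- The multiplier operator `z(p)`, `(z(p)ψ)(q₁) = χ(p,q₁)ψ(q₁)`. -/
def multOp (ε : F → ℂ) {K : Type*} [Fintype K] (p : K → F) : HS F K →ₗ[ℂ] HS F K :=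
  mulFun (chi ε p)

/-- The Weyl operator `w(ξ) = z(p)x(q)` of the phase space point `ξ = (p,q)`. -/
def weylOp (ε : F → ℂ) {K : Type*} [Fintype K] (ξ : (K → F) × (K → F)) :
    HS F K →ₗ[ℂ] HS F K :=
  multOp ε ξ.1 ∘ₗ shiftOp ξ.2

/-- The normalization constant `d^(-n/2)` (where `d = |F|`) as a complex number. -/
def rnorm (F : Type*) [Fintype F] (n : ℕ) : ℂ :=
  (((Fintype.card F : ℝ) ^ (-(n : ℝ) / 2) : ℝ) : ℂ)

/-- The Haar-normalized inner product on `H_K`: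
`⟨ψ,φ⟩ = d^(-|K|) Σ_q conj(ψ q) φ q`. -/
def hinner {K : Type*} [Fintype K] [DecidableEq K] (ψ φ : HS F K) : ℂ :=
  ((Fintype.card F : ℂ) ^ (Fintype.card K))⁻¹ *
    ∑ q : K → F, (starRingEnd ℂ) (ψ q) * φ q

/-- The delta-function basis vector located at `q`. -/
def deltaV {K : Type*} [Fintype K] [DecidableEq K] (q : K → F) : HS F K :=
  fun q' => if q' = q then 1 else 0

/-- The adjoint of an operator with respect to the Haar-normalized inner
products `hinner` on source and target. -/
def hAdj {K M : Type*} [Fintype K] [Fintype M] [DecidableEq K] [DecidableEq M]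
    (A : HS F K →ₗ[ℂ] HS F M) : HS F M →ₗ[ℂ] HS F K :=
  kernelMap (fun qK qM =>
    (Fintype.card F : ℂ) ^ (Fintype.card K) * ((Fintype.card F : ℂ) ^ (Fintype.card M))⁻¹ *
      (starRingEnd ℂ) (A (deltaV qK) qM))

variable {I J L : Type*} [Fintype I] [Fintype J] [Fintype L]
  [DecidableEq I] [DecidableEq J] [DecidableEq L]

/-- Combining configurations on `I`, `J`, `L` into one on `I ⊕ J ⊕ L`. -/
def combine (qI : I → F) (qJ : J → F) (qL : L → F) : (I ⊕ J ⊕ L) → F :=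
  Sum.elim qI (Sum.elim qJ qL)

/-- Inclusion of the input vertices. -/
def inI : I → I ⊕ J ⊕ L := Sum.inl
/-- Inclusion of the output vertices. -/
def inJ : J → I ⊕ J ⊕ L := fun j => Sum.inr (Sum.inl j)
/-- Inclusion of the syndrome vertices. -/
def inL : L → I ⊕ J ⊕ L := fun l => Sum.inr (Sum.inr l)
/-- Inclusion of the input and syndrome vertices. -/
def embIL : I ⊕ L → I ⊕ J ⊕ L := Sum.elim inI inL

/-- The `J`-rows of `Λ` applied to a full configuration (`Λ^J_{IJL} q^{IJL}`). -/
def appJ (Λ : Matrix (I ⊕ J ⊕ L) (I ⊕ J ⊕ L) F) (v : (I ⊕ J ⊕ L) → F) : J → F :=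
  fun j => Λ.mulVec v (inJ j)

/-- The `I`-rows of `Λ` applied to a full configuration (`Λ^I_{IJL} q^{IJL}`). -/
def appI (Λ : Matrix (I ⊕ J ⊕ L) (I ⊕ J ⊕ L) F) (v : (I ⊕ J ⊕ L) → F) : I → F :=
  fun i => Λ.mulVec v (inI i)

/-- The block `Λ^J_{IL}` (rows in `J`, columns in `I ∪ L`). -/
def blockJIL (Λ : Matrix (I ⊕ J ⊕ L) (I ⊕ J ⊕ L) F) : Matrix J (I ⊕ L) F :=
  fun j il => Λ (inJ j) (embIL il)

/-- A weighted graph (adjacency matrix) is admissible: it is symmetric, the block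
`Λ^J_{IL}` is invertible and the block `Λ^{IL}_{IL}` vanishes. -/
def Admissible (Λ : Matrix (I ⊕ J ⊕ L) (I ⊕ J ⊕ L) F) : Prop :=
  Λ.IsSymm ∧ (∃ B : Matrix (I ⊕ L) J F, blockJIL Λ * B = 1 ∧ B * blockJIL Λ = 1) ∧
    ∀ a b : I ⊕ L, Λ (embIL a) (embIL b) = 0

/-- `τ(Λ,·)` is a family of unimodular phases forming a one-dimensional projective
representation: `τ(q₁+q₂) = τ(q₁)τ(q₂)χ(Λq₁,q₂)`. -/
def IsTau (ε : F → ℂ) (Λ : Matrix (I ⊕ J ⊕ L) (I ⊕ J ⊕ L) F)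
    (tau : ((I ⊕ J ⊕ L) → F) → ℂ) : Prop :=
  (∀ q, ‖tau q‖ = 1) ∧
    ∀ q₁ q₂, tau (q₁ + q₂) = tau q₁ * tau q₂ * chi ε (Λ.mulVec q₁) q₂

/-- The graph code operator `v_{[Λ,q^L]} : H_I → H_J`,
`(v ψ)(q^J) = d^(-|I|/2) Σ_{q^I} τ(Λ, q^{IJL}) ψ(q^I)`. -/
def gcode (tau : ((I ⊕ J ⊕ L) → F) → ℂ) (qL : L → F) : HS F I →ₗ[ℂ] HS F J :=
  kernelMap (fun qJ qI => rnorm F (Fintype.card I) * tau (combine qI qJ qL))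

/-- The syndrome-table condition `γ_Λ(ξ^J, q^L, ξ^I) = 0`:
`p^J = Λ^J_{IJL} q^{IJL}` and `p^I = Λ^I_J q^J`. -/
def GammaZero (Λ : Matrix (I ⊕ J ⊕ L) (I ⊕ J ⊕ L) F)
    (pJ qJ : J → F) (qL : L → F) (pI qI : I → F) : Prop :=
  pJ = appJ Λ (combine qI qJ qL) ∧ pI = appI Λ (combine 0 qJ 0)

/-- The weight of a phase space vector `ξ^J = (p^J,q^J)`. -/
def wt {J : Type*} [Fintype J] (pJ qJ : J → F) : ℕ :=
  (Finset.univ.filter fun j => ¬(pJ j = 0 ∧ qJ j = 0)).card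

/-- `Λ` is associated with a `t`-error correcting code: for every set `E ⊆ J` with
at most `2t` elements, `Λ^{J∖E}_{IE} q^{IE} = 0` implies `q^I = 0` and
`Λ^I_E q^E = 0`. -/
def TCode (Λ : Matrix (I ⊕ J ⊕ L) (I ⊕ J ⊕ L) F) (t : ℕ) : Prop :=
  ∀ E : Finset J, E.card ≤ 2 * t → ∀ (qI : I → F) (qJ : J → F),
    (∀ j ∉ E, qJ j = 0) →
    (∀ j ∉ E, appJ Λ (combine qI qJ 0) j = 0) →
    qI = 0 ∧ appI Λ (combine 0 qJ 0) = 0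

/-- Tensoring with the standard (shift invariant) vector `Ω_K ≡ 1`:
the isometry `Φ_K : H_M → H_{M⊕K}`, `(Φψ)(q) = ψ(q∘inl)`. -/
def tensOmega {M K : Type*} : HS F M →ₗ[ℂ] HS F (M ⊕ K) :=
  compMap (fun q => q ∘ Sum.inl)

/-- The Fourier transform acting on the `K`-factor of `H_{M⊕K}`. -/
def fourierR (ε : F → ℂ) {M K : Type*} [Fintype K] [DecidableEq K] :
    HS F (M ⊕ K) →ₗ[ℂ] HS F (M ⊕ K) where
  toFun φ := fun q => ∑ qK' : K → F,
    rnorm F (Fintype.card K) * chi ε (q ∘ Sum.inr) qK' * φ (Sum.elim (q ∘ Sum.inl) qK')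
  map_add' φ₁ φ₂ := by
    funext q
    simp only [Pi.add_apply, mul_add, Finset.sum_add_distrib]
  map_smul' c φ := by
    funext q
    simp only [Pi.smul_apply, smul_eq_mul, RingHom.id_apply, Finset.mul_sum]
    exact Finset.sum_congr rfl fun _ _ => by ring

/-- The multiplier `z(p)` acting on the `K`-factor of `H_{M⊕K}`. -/
def zR (ε : F → ℂ) {M K : Type*} [Fintype K] (p : K → F) :
    HS F (M ⊕ K) →ₗ[ℂ] HS F (M ⊕ K) :=
  mulFun (fun q => chi ε p (q ∘ Sum.inr))

/-- The selected error `ξ^I_{[q^L]}`: the unique `ξ^I` such that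
`γ_Λ(ξ^J, q^L, ξ^I) = 0` for some `ξ^J` of weight at most `t`, if such exists,
and `(0,0)` otherwise. -/
def xiSel (Λ : Matrix (I ⊕ J ⊕ L) (I ⊕ J ⊕ L) F) (t : ℕ) (qL : L → F) :
    (I → F) × (I → F) :=
  @dite _ (∃ ξI : (I → F) × (I → F), ∃ pJ qJ : J → F,
      wt pJ qJ ≤ t ∧ GammaZero Λ pJ qJ qL ξI.1 ξI.2)
    (Classical.dec _) (fun h => h.choose) (fun _ => (0, 0))

/-!
Shifting the output by `q^J` amounts to adding `-v` with `v = (0, q^J, 0)` to the argument of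
`τ`. The cocycle relation of `τ` turns this into `τ(-v) · χ(-Λv, q^{IJL}) · τ(q^{IJL})`, where the
symmetry of `Λ` moves `Λ` onto `v`. Splitting `χ(-Λv, ·)` over `I`, `J`, `L`, the `J`- and
`I`-parts are the two multipliers of the claim, while the `L`-part and `τ(-v)` do not depend on
the summation variables and form the unimodular constant `λ`.
-/

section KernelOperators

variable {α β γ : Type*} [Fintype α]

theorem mulFun_comp_kernelMap (f : β → ℂ) (k : β → α → ℂ) :
    mulFun f ∘ₗ kernelMap k = kernelMap fun b a => f b * k b a := by
  ext ψ b
  simp only [mulFun, kernelMap, LinearMap.comp_apply, LinearMap.coe_mk, AddHom.coe_mk,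
    Finset.mul_sum, mul_assoc]

theorem compMap_comp_kernelMap (σ : γ → β) (k : β → α → ℂ) :
    compMap σ ∘ₗ kernelMap k = kernelMap fun c a => k (σ c) a :=
  rfl

theorem kernelMap_comp_mulFun (k : β → α → ℂ) (f : α → ℂ) :
    kernelMap k ∘ₗ mulFun f = kernelMap fun b a => k b a * f a := by
  ext ψ b
  simp only [mulFun, kernelMap, LinearMap.comp_apply, LinearMap.coe_mk, AddHom.coe_mk, mul_assoc]

theorem smul_kernelMap (c : ℂ) (k : β → α → ℂ) :
    c • kernelMap k = kernelMap fun b a => c * k b a := by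
  ext ψ b
  simp only [kernelMap, LinearMap.smul_apply, LinearMap.coe_mk, AddHom.coe_mk, Pi.smul_apply,
    smul_eq_mul, Finset.mul_sum, mul_assoc]

end KernelOperators

section Phases

open Matrix

variable {F : Type*} [Field F] {ε : F → ℂ}

theorem IsCharacter.map_zero (hε : IsCharacter ε) : ε 0 = 1 := by
  have hne : ε 0 ≠ 0 := fun h => by simpa [h] using hε.2.1 0
  exact mul_left_cancel₀ hne (by rw [mul_one, ← hε.2.2, add_zero])

theorem IsCharacter.map_sum (hε : IsCharacter ε) {α : Type*} (s : Finset α) (f : α → F) :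
    ε (∑ a ∈ s, f a) = ∏ a ∈ s, ε (f a) := by
  classical
  induction s using Finset.induction with
  | empty => simpa using hε.map_zero
  | insert a s ha ih => rw [Finset.sum_insert ha, Finset.prod_insert ha, hε.2.2, ih]

variable {K : Type*} [Fintype K]

theorem IsCharacter.chi_eq (hε : IsCharacter ε) (p q : K → F) : chi ε p q = ε (p ⬝ᵥ q) :=
  (hε.map_sum _ _).symm

theorem IsCharacter.norm_chi (hε : IsCharacter ε) (p q : K → F) : ‖chi ε p q‖ = 1 := by
  simp only [chi, norm_prod, hε.2.1, Finset.prod_const_one]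

theorem IsCharacter.chi_add_left (hε : IsCharacter ε) (p p' q : K → F) :
    chi ε (p + p') q = chi ε p q * chi ε p' q := by
  simp only [chi, Pi.add_apply, add_mul, hε.2.2, Finset.prod_mul_distrib]

variable {I J L : Type*} [Fintype I] [Fintype J] [Fintype L]

theorem chi_combine (w : I ⊕ J ⊕ L → F) (qI : I → F) (qJ : J → F) (qL : L → F) :
    chi ε w (combine qI qJ qL)
      = chi ε (w ∘ inI) qI * chi ε (w ∘ inJ) qJ * chi ε (w ∘ inL) qL := by
  simp only [chi, Fintype.prod_sum_type, mul_assoc]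
  rfl

theorem IsTau.apply_sub {Λ : Matrix (I ⊕ J ⊕ L) (I ⊕ J ⊕ L) F}
    {tau : ((I ⊕ J ⊕ L) → F) → ℂ} (htau : IsTau ε Λ tau) (hε : IsCharacter ε) (hΛ : Λ.IsSymm)
    (u v : I ⊕ J ⊕ L → F) :
    tau (u - v) = tau (-v) * chi ε (-(Λ *ᵥ v)) u * tau u := by
  have hdot : (Λ *ᵥ u) ⬝ᵥ (-v) = (-(Λ *ᵥ v)) ⬝ᵥ u := by
    rw [dotProduct_neg, neg_dotProduct, dotProduct_comm, dotProduct_mulVec,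
      ← mulVec_transpose, hΛ.eq]
  rw [sub_eq_add_neg, htau.2, hε.chi_eq, hε.chi_eq, hdot]
  ring

theorem IsTau.apply_combine_sub_output {Λ : Matrix (I ⊕ J ⊕ L) (I ⊕ J ⊕ L) F}
    {tau : ((I ⊕ J ⊕ L) → F) → ℂ} (htau : IsTau ε Λ tau) (hε : IsCharacter ε) (hΛ : Λ.IsSymm)
    (qI : I → F) (qJ₁ qJ : J → F) (qL : L → F) :
    tau (combine qI (qJ₁ - qJ) qL)
      = tau (-combine 0 qJ 0) * chi ε ((-(Λ *ᵥ combine 0 qJ 0)) ∘ inL) qL *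
          chi ε (-appJ Λ (combine 0 qJ 0)) qJ₁ * chi ε (-appI Λ (combine 0 qJ 0)) qI *
          tau (combine qI qJ₁ qL) := by
  have hshift : combine qI (qJ₁ - qJ) qL = combine qI qJ₁ qL - combine 0 qJ 0 := by
    funext a
    rcases a with i | j | l <;> simp [combine]
  rw [hshift, htau.apply_sub hε hΛ, chi_combine]
  change _ * (chi ε (-appI Λ _) qI * chi ε (-appJ Λ _) qJ₁ * _) * _ = _
  ring

end Phases

theorem weyl_gcode_commutation_output_general
    {F : Type*} [Field F] [Fintype F]
    {I J L : Type*} [Fintype I] [Fintype J] [Fintype L]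
    [DecidableEq I] [DecidableEq J] [DecidableEq L]
    (ε : F → ℂ) (hε : IsCharacter ε)
    (Λ : Matrix (I ⊕ J ⊕ L) (I ⊕ J ⊕ L) F) (hΛ : Admissible Λ)
    (tau : ((I ⊕ J ⊕ L) → F) → ℂ) (htau : IsTau ε Λ tau) :
    ∀ (qJ : J → F) (qL : L → F), ∃ lam : ℂ, ‖lam‖ = 1 ∧
      ∀ pJ : J → F,
        weylOp ε (pJ, qJ) ∘ₗ gcode tau qL
          = lam • (multOp ε (pJ - appJ Λ (combine 0 qJ 0)) ∘ₗ gcode tau qL ∘ₗ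
              multOp ε (-(appI Λ (combine 0 qJ 0)))) := by
  intro qJ qL
  refine ⟨tau (-combine 0 qJ 0) * chi ε ((-(Λ.mulVec (combine 0 qJ 0))) ∘ inL) qL,
    by rw [norm_mul, htau.1, hε.norm_chi, one_mul], fun pJ => ?_⟩
  simp only [weylOp, multOp, shiftOp, gcode, LinearMap.comp_assoc, compMap_comp_kernelMap,
    mulFun_comp_kernelMap, kernelMap_comp_mulFun, smul_kernelMap]
  congr 1
  funext qJ₁ qI
  rw [htau.apply_combine_sub_output hε hΛ.1, sub_eq_add_neg pJ, hε.chi_add_left]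
  ring

/-- Lemma com-rel, part 2. For an admissible graph `Λ`, for every
`q^J` and `q^L` there is a unimodular `λ` (independent of `p^J`) with
`w(ξ^J) v_{[Λ,q^L]} = λ · z(p^J - Λ^J_J q^J) v_{[Λ,q^L]} z(-Λ^I_J q^J)`
for all `p^J`. -/
theorem weyl_gcode_commutation_output
    {F : Type*} [Field F] [Fintype F] [DecidableEq F]
    {I J L : Type*} [Fintype I] [Fintype J] [Fintype L]
    [DecidableEq I] [DecidableEq J] [DecidableEq L]
    (ε : F → ℂ) (hε : IsCharacter ε)
    (Λ : Matrix (I ⊕ J ⊕ L) (I ⊕ J ⊕ L) F) (hΛ : Admissible Λ)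
    (tau : ((I ⊕ J ⊕ L) → F) → ℂ) (htau : IsTau ε Λ tau) :
    ∀ (qJ : J → F) (qL : L → F), ∃ lam : ℂ, ‖lam‖ = 1 ∧
      ∀ pJ : J → F,
        weylOp ε (pJ, qJ) ∘ₗ gcode tau qL
          = lam • (multOp ε (pJ - appJ Λ (combine 0 qJ 0)) ∘ₗ gcode tau qL ∘ₗ
              multOp ε (-(appI Λ (combine 0 qJ 0)))) :=
  weyl_gcode_commutation_output_general ε hε Λ hΛ tau htau
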